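/- arXiv:0908.2265 — 3 statements merged into one kernel-verified Lean document; each statement's English description precedes it below -/
import Mathlib

section
/- Divergence of generalized momenta (Lemma 2.1): Let U ⊆ ℝ⁴ be open with coordinates x⁰,…,x³, let μ̄ > 0 and V̄ be smooth functions on U, let Ḡ^{αβ} be a smooth symmetric (2,0)-tensor field on U, let X = X^α∂_α be a smooth vector field and q a smooth function on U, and for smooth ψ : U → ℝ define P^α_{(X,q)}[ψ] = (−Ḡ^{αγ}(∂_γψ)(∂_βψ) + (1/2)δ^α_β(Ḡ^{ρσ}(∂_ρψ)(∂_σψ) + V̄ψ²))X^β + Ḡ^{αβ}(−q(∂_βψ)ψ + (1/2)(∂_βq)ψ²) (summation over repeated indices). Then for every smooth solution ψ of μ̄⁻¹∂_α(μ̄Ḡ^{αβ}∂_βψ) − V̄ψ = 0, one has the pointwise identity μ̄⁻¹∂_α(μ̄ P^α_{(X,q)}[ψ]) = (−Ḡ^{αγ}(∂_γX^β) + (1/2)(∂_γX^γ)Ḡ^{αβ} + (1/2)μ̄⁻¹X^γ ∂_γ(μ̄Ḡ^{αβ}))(∂_αψ)(∂_βψ) + ((1/2)(∂_γX^γ)V̄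 + (1/2)μ̄⁻¹X^γ∂_γ(μ̄V̄))ψ² − q(Ḡ^{αβ}(∂_αψ)(∂_βψ) + V̄ψ²) + (1/2)μ̄⁻¹∂_α(μ̄Ḡ^{αβ}∂_βq)·ψ². -/
noncomputable section

open MeasureTheory Filter Topology

namespace KerrPaper

abbrev V4 : Type := Fin 4 → ℝ

/-- Partial derivative in the `i`-th coordinate (coordinates: 0 = t, 1 = r, 2 = θ, 3 = φ). -/
def pd (i : Fin 4) (ψ : V4 → ℝ) : V4 → ℝ :=
  fun x => deriv (fun s => ψ (Function.update x i s)) (x i)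

def rplus (M a : ℝ) : ℝ := M + Real.sqrt (M ^ 2 - a ^ 2)

def Δk (M a r : ℝ) : ℝ := r ^ 2 - 2 * M * r + a ^ 2

def SigK (a r θ : ℝ) : ℝ := r ^ 2 + a ^ 2 * Real.cos θ ^ 2

def PiK (M a r θ : ℝ) : ℝ := (r ^ 2 + a ^ 2) ^ 2 - a ^ 2 * Real.sin θ ^ 2 * Δk M a r

def ωH (M a : ℝ) : ℝ := a / (rplus M a ^ 2 + a ^ 2)

/-- The exterior region in Boyer–Lindquist coordinates `(t, r, θ, φ)`. -/
def ext (M a : ℝ) : Set V4 := {x | rplus M a < x 1 ∧ 0 < x 2 ∧ x 2 < Real.pi}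

/-- The Carter operator. -/
def carterQ (a : ℝ) (ψ : V4 → ℝ) : V4 → ℝ :=
  fun x =>
    (Real.sin (x 2))⁻¹ * pd 2 (fun y => Real.sin (y 2) * pd 2 ψ y) x +
      Real.cos (x 2) ^ 2 / Real.sin (x 2) ^ 2 * pd 3 (pd 3 ψ) x +
      a ^ 2 * Real.sin (x 2) ^ 2 * pd 0 (pd 0 ψ) x

/-- The operator ℛ(r; M, a; ∂_t, ∂_φ, Q). -/
def curlyR (M a : ℝ) (ψ : V4 → ℝ) : V4 → ℝ :=
  fun x =>
    -((x 1 ^ 2 + a ^ 2) ^ 2) * pd 0 (pd 0 ψ) x - 4 * a * M * x 1 * pd 0 (pd 3 ψ) x +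
      (Δk M a (x 1) - a ^ 2) * pd 3 (pd 3 ψ) x + Δk M a (x 1) * carterQ a ψ x

/-- The (rescaled) wave operator □ = Σ ∇^α∇_α. -/
def box (M a : ℝ) (ψ : V4 → ℝ) : V4 → ℝ :=
  fun x => pd 1 (fun y => Δk M a (y 1) * pd 1 ψ y) x + (Δk M a (x 1))⁻¹ * curlyR M a ψ x

/-- ψ is a smooth solution of the wave equation on the exterior region. -/
def IsWaveSol (M a : ℝ) (ψ : V4 → ℝ) : Prop :=
  ContDiffOn ℝ (⊤ : ℕ∞) ψ (ext M a) ∧ ∀ x ∈ ext M a, box M a ψ x = 0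

/-- G^{αβ} = Σ g^{αβ}, the rescaled inverse Kerr metric in BL coordinates. -/
def Ginv (M a r θ : ℝ) : Matrix (Fin 4) (Fin 4) ℝ :=
  !![-(PiK M a r θ) / Δk M a r, 0, 0, -(2 * a * M * r) / Δk M a r;
     0, Δk M a r, 0, 0;
     0, 0, 1, 0;
     -(2 * a * M * r) / Δk M a r, 0, 0,
       (Δk M a r - a ^ 2 * Real.sin θ ^ 2) / (Δk M a r * Real.sin θ ^ 2)]

/-- The momentum P_X^α[ψ]. -/
def momentum (M a : ℝ) (X : V4 → Fin 4 → ℝ) (ψ : V4 → ℝ) (α : Fin 4) : V4 → ℝ :=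
  fun x =>
    -(∑ γ, Ginv M a (x 1) (x 2) α γ * pd γ ψ x) * (∑ β, pd β ψ x * X x β) +
      (1 / 2) * X x α * ∑ ρ, ∑ σ, Ginv M a (x 1) (x 2) ρ σ * pd ρ ψ x * pd σ ψ x

/-- Parameter domain of a constant-t slice: (r, θ, φ). -/
def sliceSet (M a : ℝ) : Set (ℝ × ℝ × ℝ) :=
  Set.Ioi (rplus M a) ×ˢ Set.Ioo 0 Real.pi ×ˢ Set.Ioo 0 (2 * Real.pi)

def pt (t : ℝ) (p : ℝ × ℝ × ℝ) : V4 := ![t, p.1, p.2.1, p.2.2]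

/-- The energy E_X[ψ](t) = ∫ P_X^t[ψ] sinθ dr dθ dφ. -/
def energy (M a : ℝ) (X : V4 → Fin 4 → ℝ) (ψ : V4 → ℝ) (t : ℝ) : ℝ :=
  ∫ p in sliceSet M a, momentum M a X ψ 0 (pt t p) * Real.sin p.2.1

/-- χ is a smooth nonincreasing cutoff, ≡ 1 for r ≤ 10M and ≡ 0 for r ≥ 11M. -/
def IsCutoff (M : ℝ) (χ : ℝ → ℝ) : Prop :=
  ContDiff ℝ (⊤ : ℕ∞) χ ∧ Antitone χ ∧ (∀ r ≤ 10 * M, χ r = 1) ∧ ∀ r, 11 * M ≤ r → χ r = 0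

/-- The blended vector field T_χ = ∂_t + χ ω_H ∂_φ. -/
def Tchi (M a : ℝ) (χ : ℝ → ℝ) : V4 → Fin 4 → ℝ :=
  fun x => ![1, 0, 0, χ (x 1) * ωH M a]

/-- Triples (n_t, n_φ, n_Q) with n_t + n_φ + 2 n_Q ≤ n, indexing ∪_{i ≤ n} 𝕊_i. -/
def symTriples (n : ℕ) : Finset (ℕ × ℕ × ℕ) :=
  (Finset.range (n + 1) ×ˢ Finset.range (n + 1) ×ˢ Finset.range (n + 1)).filter
    fun m => m.1 + m.2.1 + 2 * m.2.2 ≤ n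

/-- The symmetry operator ∂_t^{n_t} ∂_φ^{n_φ} Q^{n_Q}. -/
def symOp (a : ℝ) (m : ℕ × ℕ × ℕ) (ψ : V4 → ℝ) : V4 → ℝ :=
  (pd 0)^[m.1] ((pd 3)^[m.2.1] ((carterQ a)^[m.2.2] ψ))

/-- The order-(n+1) energy E^{n+1}_X[ψ](t) = Σ_{i=0}^{n} Σ_{S ∈ 𝕊_i} E_X[Sψ](t). -/
def energyUpTo (M a : ℝ) (X : V4 → Fin 4 → ℝ) (n : ℕ) (ψ : V4 → ℝ) (t : ℝ) : ℝ :=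
  ∑ m ∈ symTriples n, energy M a X (symOp a m ψ) t

/-- The pointwise norm ‖ψ‖_n². -/
def ptNormSq (a : ℝ) (n : ℕ) (ψ : V4 → ℝ) : V4 → ℝ :=
  fun x => ∑ m ∈ symTriples n, (symOp a m ψ x) ^ 2

/-- The pointwise norm ‖∇̸ψ‖_n². -/
def angNormSq (a : ℝ) (n : ℕ) (ψ : V4 → ℝ) : V4 → ℝ :=
  fun x => ∑ m ∈ symTriples n,
    ((pd 2 (symOp a m ψ) x) ^ 2 + (Real.sin (x 2) ^ 2)⁻¹ * (pd 3 (symOp a m ψ) x) ^ 2)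

def energyIntegrable (M a : ℝ) (X : V4 → Fin 4 → ℝ) (ψ : V4 → ℝ) (t : ℝ) : Prop :=
  IntegrableOn (fun p => momentum M a X ψ 0 (pt t p) * Real.sin p.2.1) (sliceSet M a)

def energyFiniteUpTo (M a : ℝ) (X : V4 → Fin 4 → ℝ) (n : ℕ) (ψ : V4 → ℝ) : Prop :=
  ∀ t : ℝ, ∀ m ∈ symTriples n, energyIntegrable M a X (symOp a m ψ) t

/-! Transformed (tortoise-coordinate) quantities. -/

/-- Tortoise coordinate: dr/dr_* = Δ/(r²+a²), r_*(3M) = 0. -/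
def rstar (M a r : ℝ) : ℝ := ∫ s in (3 * M)..r, (s ^ 2 + a ^ 2) / Δk M a s

/-- Ñ² where Ñ⁻² = 1 − a² sin²θ Δ/(r²+a²)². -/
def Ntilde2 (M a r θ : ℝ) : ℝ :=
  (1 - a ^ 2 * Real.sin θ ^ 2 * Δk M a r / (r ^ 2 + a ^ 2) ^ 2)⁻¹

def VQ (M a r : ℝ) : ℝ := Δk M a r / (r ^ 2 + a ^ 2) ^ 2

/-- The potential V of the transformed wave equation. -/
def Vpot (M a r : ℝ) : ℝ :=
  Δk M a r * (2 * M * r ^ 3 + r ^ 2 * a ^ 2 - 4 * M * r * a ^ 2 + a ^ 4) / (r ^ 2 + a ^ 2) ^ 4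

/-- Partial derivatives in the (t, r_*, θ, φ) coordinates, acting on functions
parameterized by BL coordinates; ∂_{r_*} = (Δ/(r²+a²)) ∂_r. -/
def tpd (M a : ℝ) (i : Fin 4) (u : V4 → ℝ) : V4 → ℝ :=
  fun x => if i = 1 then Δk M a (x 1) / (x 1 ^ 2 + a ^ 2) * pd 1 u x else pd i u x

/-- G̃^{αβ} = (ΣΔ/(r²+a²)²) g^{αβ} in (t, r_*, θ, φ) coordinates. -/
def Gtilde (M a r θ : ℝ) : Matrix (Fin 4) (Fin 4) ℝ :=
  !![-(PiK M a r θ) / (r ^ 2 + a ^ 2) ^ 2, 0, 0, -(2 * a * M * r) / (r ^ 2 + a ^ 2) ^ 2;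
     0, 1, 0, 0;
     0, 0, VQ M a r, 0;
     -(2 * a * M * r) / (r ^ 2 + a ^ 2) ^ 2, 0, 0,
       (Δk M a r - a ^ 2 * Real.sin θ ^ 2) / ((r ^ 2 + a ^ 2) ^ 2 * Real.sin θ ^ 2)]

/-- The transformed momentum P̃^α_{(X,q)}[ũ]. -/
def tmomentum (M a : ℝ) (X : V4 → Fin 4 → ℝ) (q : V4 → ℝ) (u : V4 → ℝ) (α : Fin 4) :
    V4 → ℝ :=
  fun x =>
    -(∑ γ, Gtilde M a (x 1) (x 2) α γ * tpd M a γ u x) * (∑ β, tpd M a β u x * X x β) +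
      (1 / 2) * X x α *
        ((∑ ρ, ∑ σ, Gtilde M a (x 1) (x 2) ρ σ * tpd M a ρ u x * tpd M a σ u x) +
          Vpot M a (x 1) * u x ^ 2) +
      ∑ β, Gtilde M a (x 1) (x 2) α β *
        (-(q x) * tpd M a β u x * u x + (1 / 2) * tpd M a β q x * u x ^ 2)

/-- The transformed energy Ẽ_{(X,q)}[ũ](t) = ∫ P̃^t sinθ dr_* dθ dφ (as an r-integral). -/
def tenergy (M a : ℝ) (X : V4 → Fin 4 → ℝ) (q : V4 → ℝ) (u : V4 → ℝ) (t : ℝ) : ℝ :=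
  ∫ p in sliceSet M a,
    tmomentum M a X q u 0 (pt t p) * Real.sin p.2.1 * ((p.1 ^ 2 + a ^ 2) / Δk M a p.1)

def zeroFn : V4 → ℝ := fun _ => 0

def tenergyUpTo (M a : ℝ) (X : V4 → Fin 4 → ℝ) (q : V4 → ℝ) (n : ℕ) (u : V4 → ℝ)
    (t : ℝ) : ℝ :=
  ∑ m ∈ symTriples n, tenergy M a X q (symOp a m u) t

def tenergyIntegrable (M a : ℝ) (X : V4 → Fin 4 → ℝ) (q : V4 → ℝ) (u : V4 → ℝ)
    (t : ℝ) : Prop :=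
  IntegrableOn
    (fun p => tmomentum M a X q u 0 (pt t p) * Real.sin p.2.1 * ((p.1 ^ 2 + a ^ 2) / Δk M a p.1))
    (sliceSet M a)

def tenergyFiniteUpTo (M a : ℝ) (X : V4 → Fin 4 → ℝ) (q : V4 → ℝ) (n : ℕ)
    (u : V4 → ℝ) : Prop :=
  ∀ t : ℝ, ∀ m ∈ symTriples n, tenergyIntegrable M a X q (symOp a m u) t

/-- The vector field K = (t² + r_*² + 1) T_χ + 2 t r_* Ñ² ∂_{r_*}, in tilde coordinates. -/
def Kvec (M a : ℝ) (χ : ℝ → ℝ) : V4 → Fin 4 → ℝ :=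
  fun x =>
    ![x 0 ^ 2 + rstar M a (x 1) ^ 2 + 1,
      2 * x 0 * rstar M a (x 1) * Ntilde2 M a (x 1) (x 2),
      0,
      (x 0 ^ 2 + rstar M a (x 1) ^ 2 + 1) * (χ (x 1) * ωH M a)]

def qK (M a : ℝ) : V4 → ℝ := fun x => x 0 * (Ntilde2 M a (x 1) (x 2) - 1)

/-- T_⊥ = ∂_t + (2aMr/Π) ∂_φ. -/
def Tperp (M a : ℝ) : V4 → Fin 4 → ℝ :=
  fun x => ![1, 0, 0, 2 * a * M * x 1 / PiK M a (x 1) (x 2)]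

/-- The future unit normal n = (Π/(ΣΔ))^{1/2} T_⊥ of the constant-t slices. -/
def normalVF (M a : ℝ) : V4 → Fin 4 → ℝ :=
  fun x i =>
    Real.sqrt (PiK M a (x 1) (x 2) / (SigK a (x 1) (x 2) * Δk M a (x 1))) * Tperp M a x i

/-- ũ = √(r² + a²) ψ. -/
def utilde (a : ℝ) (ψ : V4 → ℝ) : V4 → ℝ := fun x => Real.sqrt (x 1 ^ 2 + a ^ 2) * ψ x

/-- The transformed wave operator ∂_{r_*}² + (r²+a²)⁻² ℛ − V. -/
def tbox (M a : ℝ) (u : V4 → ℝ) : V4 → ℝ :=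
  fun x =>
    tpd M a 1 (tpd M a 1 u) x + ((x 1 ^ 2 + a ^ 2) ^ 2)⁻¹ * curlyR M a u x -
      Vpot M a (x 1) * u x

def IsTWaveSol (M a : ℝ) (u : V4 → ℝ) : Prop :=
  ContDiffOn ℝ (⊤ : ℕ∞) u (ext M a) ∧ ∀ x ∈ ext M a, tbox M a u x = 0

/-- The Kerr metric (lower indices) in BL coordinates. -/
def gBL (M a r θ : ℝ) : Matrix (Fin 4) (Fin 4) ℝ :=
  !![-(1 - 2 * M * r / SigK a r θ), 0, 0, -(2 * a * M * r * Real.sin θ ^ 2 / SigK a r θ);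
     0, SigK a r θ / Δk M a r, 0, 0;
     0, 0, SigK a r θ, 0;
     -(2 * a * M * r * Real.sin θ ^ 2 / SigK a r θ), 0, 0,
       PiK M a r θ * Real.sin θ ^ 2 / SigK a r θ]

/-- The Kerr metric (lower indices) in (t, r_*, θ, φ) coordinates. -/
def gTl (M a r θ : ℝ) : Matrix (Fin 4) (Fin 4) ℝ :=
  !![-(1 - 2 * M * r / SigK a r θ), 0, 0, -(2 * a * M * r * Real.sin θ ^ 2 / SigK a r θ);
     0, SigK a r θ * Δk M a r / (r ^ 2 + a ^ 2) ^ 2, 0, 0;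
     0, 0, SigK a r θ, 0;
     -(2 * a * M * r * Real.sin θ ^ 2 / SigK a r θ), 0, 0,
       PiK M a r θ * Real.sin θ ^ 2 / SigK a r θ]

def quadForm (g : Matrix (Fin 4) (Fin 4) ℝ) (X Y : Fin 4 → ℝ) : ℝ :=
  ∑ i, ∑ j, g i j * X i * Y j

/-! Null geodesics. -/

def gBLinv (M a r θ : ℝ) : Matrix (Fin 4) (Fin 4) ℝ := (SigK a r θ)⁻¹ • Ginv M a r θ

def vel (γ : ℝ → V4) (s : ℝ) (i : Fin 4) : ℝ := deriv (fun u => γ u i) s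

def christoffel (M a : ℝ) (x : V4) (k i j : Fin 4) : ℝ :=
  (1 / 2) * ∑ l, gBLinv M a (x 1) (x 2) k l *
    (pd i (fun y => gBL M a (y 1) (y 2) l j) x + pd j (fun y => gBL M a (y 1) (y 2) l i) x -
      pd l (fun y => gBL M a (y 1) (y 2) i j) x)

/-- r admits an orbiting null geodesic: there is a (nonconstant) null geodesic of the Kerr
metric remaining at that constant value of r in the exterior region. -/
def IsOrbitingNullGeodesicRadius (M a r : ℝ) : Prop :=
  ∃ γ : ℝ → V4,
    (∀ i, ContDiff ℝ (⊤ : ℕ∞) fun s => γ s i) ∧ (∀ s, γ s ∈ ext M a) ∧ (∀ s, γ s 1 = r) ∧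
      (∃ s i, vel γ s i ≠ 0) ∧
      (∀ s, quadForm (gBL M a (γ s 1) (γ s 2)) (vel γ s) (vel γ s) = 0) ∧
      ∀ s k, deriv (fun u => vel γ u k) s +
        ∑ i, ∑ j, christoffel M a (γ s) k i j * vel γ s i * vel γ s j = 0

/-! Morawetz (symmetry-indexed) quantities. -/

/-- Coefficients ℛ^a of ℛ in the basis 𝕊₂ = {∂_t², ∂_t∂_φ, ∂_φ², Q}. -/
def Rcoef (M a r : ℝ) : Fin 4 → ℝ :=
  ![-((r ^ 2 + a ^ 2) ^ 2), -(4 * a * M * r), Δk M a r - a ^ 2, Δk M a r]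

/-- Coefficients ℒ^a of ℒ = ∂_t² + ∂_φ² + Q in the basis 𝕊₂. -/
def Lcoef : Fin 4 → ℝ := ![1, 0, 1, 1]

/-- The second-order symmetry operators S_a ∈ 𝕊₂. -/
def symS (a : ℝ) (c : Fin 4) (ψ : V4 → ℝ) : V4 → ℝ :=
  if c = 0 then pd 0 (pd 0 ψ)
  else if c = 1 then pd 0 (pd 3 ψ)
  else if c = 2 then pd 3 (pd 3 ψ)
  else carterQ a ψ

/-- The coefficient matrices S_a^{αβ} with S_a = μ⁻¹ ∂_α (μ S_a^{αβ} ∂_β). -/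
def Smat (a : ℝ) (c : Fin 4) (θ : ℝ) : Matrix (Fin 4) (Fin 4) ℝ :=
  if c = 0 then !![1, 0, 0, 0; 0, 0, 0, 0; 0, 0, 0, 0; 0, 0, 0, 0]
  else if c = 1 then !![0, 0, 0, 1 / 2; 0, 0, 0, 0; 0, 0, 0, 0; 1 / 2, 0, 0, 0]
  else if c = 2 then !![0, 0, 0, 0; 0, 0, 0, 0; 0, 0, 0, 0; 0, 0, 0, 1]
  else
    !![a ^ 2 * Real.sin θ ^ 2, 0, 0, 0; 0, 0, 0, 0; 0, 0, 1, 0;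
       0, 0, 0, Real.cos θ ^ 2 / Real.sin θ ^ 2]

/-- ℒ^{αβ} = Σ_c ℒ^c S_c^{αβ}. -/
def Lmat (a : ℝ) (θ : ℝ) : Matrix (Fin 4) (Fin 4) ℝ :=
  fun α β => ∑ c, Lcoef c * Smat a c θ α β

/-- ℛ̃′^a = ∂_r (z₁ Δ⁻¹ ℛ^a). -/
def Rtp (M a : ℝ) (z₁ : ℝ → ℝ) (c : Fin 4) (r : ℝ) : ℝ :=
  deriv (fun s => z₁ s * (Δk M a s)⁻¹ * Rcoef M a s c) r

/-- ℛ̃̃″^a = ∂_r (z₂ z₁^{1/2} Δ^{−1/2} ℛ̃′^a). -/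
def Rtpp (M a : ℝ) (z₁ z₂ : ℝ → ℝ) (c : Fin 4) (r : ℝ) : ℝ :=
  deriv (fun s => z₂ s * Real.sqrt (z₁ s) * (Real.sqrt (Δk M a s))⁻¹ * Rtp M a z₁ c s) r

/-- 𝒜^a = z₁^{1/2} Δ^{3/2} (−ℛ̃̃″^a). -/
def Acoef (M a : ℝ) (z₁ z₂ : ℝ → ℝ) (c : Fin 4) (r : ℝ) : ℝ :=
  Real.sqrt (z₁ r) * (Δk M a r * Real.sqrt (Δk M a r)) * (-(Rtpp M a z₁ z₂ c r))

/-- 𝒰^{cd} = (1/2) z₂ ℛ̃′^c ℛ̃′^d. -/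
def Ucoef (M a : ℝ) (z₁ z₂ : ℝ → ℝ) (c d : Fin 4) (r : ℝ) : ℝ :=
  (1 / 2) * z₂ r * Rtp M a z₁ c r * Rtp M a z₁ d r

/-- 𝒱^a = (1/4) ∂_r (Δ ∂_r (z₁ ∂_r (z₂ ℛ̃′^a))). -/
def Vcoef (M a : ℝ) (z₁ z₂ : ℝ → ℝ) (c : Fin 4) (r : ℝ) : ℝ :=
  (1 / 4) *
    deriv (fun s =>
      Δk M a s * deriv (fun w => z₁ w * deriv (fun v => z₂ v * Rtp M a z₁ c v) w) s) r

/-- The r-component of the Morawetz vector field A^{ab} = z₁ z₂ ℛ̃′^{(a} ℒ^{b)} ∂_r. -/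
def AvecR (M a : ℝ) (z₁ z₂ : ℝ → ℝ) (i j : Fin 4) (r : ℝ) : ℝ :=
  z₁ r * z₂ r * ((1 / 2) * (Rtp M a z₁ i r * Lcoef j + Rtp M a z₁ j r * Lcoef i))

/-- The Morawetz scalars q_A^{ab}. -/
def qA (M a : ℝ) (z₁ z₂ : ℝ → ℝ) (i j : Fin 4) (r : ℝ) : ℝ :=
  (1 / 2) * deriv (AvecR M a z₁ z₂ i j) r -
    (1 / 2) * deriv z₁ r * z₂ r *
      ((1 / 2) * (Rtp M a z₁ i r * Lcoef j + Rtp M a z₁ j r * Lcoef i))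

/-- The symmetry-indexed Morawetz momentum P_A^α[ψ]. -/
def morMomentum (M a : ℝ) (z₁ z₂ : ℝ → ℝ) (ψ : V4 → ℝ) (α : Fin 4) : V4 → ℝ :=
  fun x => ∑ i, ∑ j,
    (-(∑ γ, Ginv M a (x 1) (x 2) α γ * pd γ (symS a i ψ) x) * pd 1 (symS a j ψ) x *
        AvecR M a z₁ z₂ i j (x 1) +
      (1 / 2) * (if α = 1 then AvecR M a z₁ z₂ i j (x 1) else 0) *
        (∑ ρ, ∑ σ, Ginv M a (x 1) (x 2) ρ σ * pd ρ (symS a i ψ) x * pd σ (symS a j ψ) x) +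
      ∑ β, Ginv M a (x 1) (x 2) α β *
        (-(qA M a z₁ z₂ i j (x 1)) * pd β (symS a i ψ) x * symS a j ψ x +
          (1 / 2) * pd β (fun y => qA M a z₁ z₂ i j (y 1)) x * symS a i ψ x * symS a j ψ x))

/-- The first boundary current P∂₁^α[ψ]. -/
def morBoundary1 (M a : ℝ) (z₁ z₂ : ℝ → ℝ) (ψ : V4 → ℝ) (α : Fin 4) : V4 → ℝ :=
  fun x => ∑ i, ∑ j, ∑ β,
    (Ucoef M a z₁ z₂ i j (x 1) * Lmat a (x 2) α β -
        ∑ c, (1 / 2) *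
          (Ucoef M a z₁ z₂ c i (x 1) * Lcoef j + Ucoef M a z₁ z₂ c j (x 1) * Lcoef i) *
          Smat a c (x 2) α β) *
      symS a i ψ x * pd β (symS a j ψ) x

/-! Surface energies. -/

def pdR (f : ℝ × ℝ × ℝ → ℝ) (p : ℝ × ℝ × ℝ) : ℝ := deriv (fun s => f (s, p.2)) p.1

def pdTh (f : ℝ × ℝ × ℝ → ℝ) (p : ℝ × ℝ × ℝ) : ℝ :=
  deriv (fun s => f (p.1, s, p.2.2)) p.2.1

def pdPh (f : ℝ × ℝ × ℝ → ℝ) (p : ℝ × ℝ × ℝ) : ℝ :=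
  deriv (fun s => f (p.1, p.2.1, s)) p.2.2

/-- Flux of the transformed momentum through the graph t = f(r_*, θ, φ)
(f given as a function of (r, θ, φ), with ∂_{r_*} f = (Δ/(r²+a²)) ∂_r f). -/
def tsurfEnergy (M a : ℝ) (X : V4 → Fin 4 → ℝ) (q : V4 → ℝ) (u : V4 → ℝ)
    (f : ℝ × ℝ × ℝ → ℝ) : ℝ :=
  ∫ p in sliceSet M a,
    (tmomentum M a X q u 0 (pt (f p) p) -
        Δk M a p.1 / (p.1 ^ 2 + a ^ 2) * pdR f p * tmomentum M a X q u 1 (pt (f p) p) -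
        pdTh f p * tmomentum M a X q u 2 (pt (f p) p) -
        pdPh f p * tmomentum M a X q u 3 (pt (f p) p)) *
      Real.sin p.2.1 * ((p.1 ^ 2 + a ^ 2) / Δk M a p.1)

def tsurfEnergyIntegrable (M a : ℝ) (X : V4 → Fin 4 → ℝ) (q : V4 → ℝ) (u : V4 → ℝ)
    (f : ℝ × ℝ × ℝ → ℝ) : Prop :=
  IntegrableOn
    (fun p =>
      (tmomentum M a X q u 0 (pt (f p) p) -
          Δk M a p.1 / (p.1 ^ 2 + a ^ 2) * pdR f p * tmomentum M a X q u 1 (pt (f p) p) -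
          pdTh f p * tmomentum M a X q u 2 (pt (f p) p) -
          pdPh f p * tmomentum M a X q u 3 (pt (f p) p)) *
        Real.sin p.2.1 * ((p.1 ^ 2 + a ^ 2) / Δk M a p.1))
    (sliceSet M a)


/-- The canonical momentum P^α_{(X,q)}[ψ] for the Lagrangian
L̄ = (1/2)(Ḡ^{αβ}(∂_αψ)(∂_βψ) + V̄ψ²) with weight μ̄. -/
def canonMomentum (Vb : V4 → ℝ) (Gb : V4 → Matrix (Fin 4) (Fin 4) ℝ)
    (X : V4 → Fin 4 → ℝ) (q ψ : V4 → ℝ) (α : Fin 4) : V4 → ℝ :=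
  fun y =>
    (∑ β, (-(∑ γ, Gb y α γ * pd γ ψ y) * pd β ψ y +
        (1 / 2) * (if α = β then 1 else 0) *
          ((∑ ρ, ∑ σ, Gb y ρ σ * pd ρ ψ y * pd σ ψ y) + Vb y * ψ y ^ 2)) * X y β) +
      ∑ β, Gb y α β * (-(q y) * pd β ψ y * ψ y + (1 / 2) * pd β q y * ψ y ^ 2)

/-!
Write `μ̄ P^α = -(Xψ + qψ) F^α + μ̄ L̄ X^α + ½ ψ² F_q^α` with the fluxes `F = μ̄ Ḡ ∂ψ` and
`F_q = μ̄ Ḡ ∂q`, and take the divergence with the product rule. The equation replaces `∂_α F^α`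
by `μ̄ V̄ ψ`, which cancels the `V̄ ψ Xψ` terms; the second derivatives of `ψ` coming from
`∂_α(Xψ)` and from `X(μ̄ L̄)` cancel by the symmetry of `Ḡ` and of the Hessian, and the terms
`ψ ∂q F` and `ψ ∂ψ F_q` cancel by the symmetry of `Ḡ`. What survives is the right-hand side.
-/

section PartialDerivative

variable {f g : V4 → ℝ} {x : V4} {i : Fin 4}

theorem pd_eq_fderiv (hf : DifferentiableAt ℝ f x) :
    pd i f x = fderiv ℝ f x (Pi.single i 1) := by
  rw [← Function.update_eq_self i x] at hf
  have h := hf.hasFDerivAt.comp_hasDerivAt (x i) (hasDerivAt_update x i (x i))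
  rw [Function.update_eq_self] at h
  exact h.deriv

theorem pd_eventuallyEq_fderiv (h : ∀ᶠ y in 𝓝 x, DifferentiableAt ℝ f y) :
    pd i f =ᶠ[𝓝 x] fun y => fderiv ℝ f y (Pi.single i 1) :=
  h.mono fun _ hy => pd_eq_fderiv hy

theorem pd_congr_of_eventuallyEq (h : f =ᶠ[𝓝 x] g) : pd i f x = pd i g x := by
  have hx : Tendsto (Function.update x i) (𝓝 (x i)) (𝓝 x) := by
    simpa using (hasDerivAt_update x i (x i)).continuousAt.tendsto
  exact (h.comp_tendsto hx).deriv_eq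

theorem pd_neg : pd i (fun y => -f y) x = -pd i f x := by
  simp only [pd, deriv.fun_neg]

theorem pd_add (hf : DifferentiableAt ℝ f x) (hg : DifferentiableAt ℝ g x) :
    pd i (fun y => f y + g y) x = pd i f x + pd i g x := by
  rw [pd_eq_fderiv (hf.fun_add hg), pd_eq_fderiv hf, pd_eq_fderiv hg, fderiv_fun_add hf hg]
  rfl

theorem pd_mul (hf : DifferentiableAt ℝ f x) (hg : DifferentiableAt ℝ g x) :
    pd i (fun y => f y * g y) x = pd i f x * g x + f x * pd i g x := by
  rw [pd_eq_fderiv (hf.fun_mul hg), pd_eq_fderiv hf, pd_eq_fderiv hg, fderiv_fun_mul hf hg]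
  simp only [add_apply, smul_apply, smul_eq_mul]
  ring

theorem pd_const_mul (c : ℝ) (hf : DifferentiableAt ℝ f x) :
    pd i (fun y => c * f y) x = c * pd i f x := by
  rw [pd_eq_fderiv (hf.const_mul c), pd_eq_fderiv hf, fderiv_const_mul hf]
  rfl

theorem pd_sq (hf : DifferentiableAt ℝ f x) :
    pd i (fun y => f y ^ 2) x = 2 * f x * pd i f x := by
  simp only [sq]
  rw [pd_mul hf hf]
  ring

theorem pd_sum {ι : Type*} (s : Finset ι) {u : ι → V4 → ℝ}
    (hu : ∀ j ∈ s, DifferentiableAt ℝ (u j) x) :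
    pd i (fun y => ∑ j ∈ s, u j y) x = ∑ j ∈ s, pd i (u j) x := by
  rw [pd_eq_fderiv (DifferentiableAt.fun_sum hu), fderiv_fun_sum hu, sum_apply]
  exact Finset.sum_congr rfl fun j hj => (pd_eq_fderiv (hu j hj)).symm

theorem contDiffAt_pd {n : ℕ} (hf : ContDiffAt ℝ (n + 1) f x) (i : Fin 4) :
    ContDiffAt ℝ n (pd i f) x := by
  have hdiff : ∀ᶠ y in 𝓝 x, DifferentiableAt ℝ f y :=
    (hf.eventually (by exact_mod_cast WithTop.natCast_ne_top (n + 1))).mono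
      fun _ hy => hy.differentiableAt (by simp)
  exact ((hf.fderiv_right le_rfl).clm_apply contDiffAt_const).congr_of_eventuallyEq
    (pd_eventuallyEq_fderiv hdiff)

theorem pd_comm (hf : ContDiffAt ℝ 2 f x) (i j : Fin 4) :
    pd i (pd j f) x = pd j (pd i f) x := by
  have hdiff : ∀ᶠ y in 𝓝 x, DifferentiableAt ℝ f y :=
    (hf.eventually (by simp)).mono fun _ hy => hy.differentiableAt (by simp)
  have hf' : DifferentiableAt ℝ (fderiv ℝ f) x :=
    (hf.fderiv_right (m := 1) (by norm_num)).differentiableAt (by simp)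
  have hsecond : ∀ k l : Fin 4,
      pd k (pd l f) x = fderiv ℝ (fderiv ℝ f) x (Pi.single k 1) (Pi.single l 1) := by
    intro k l
    rw [pd_congr_of_eventuallyEq (pd_eventuallyEq_fderiv hdiff),
      pd_eq_fderiv (hf'.clm_apply (differentiableAt_const _)),
      fderiv_clm_apply hf' (differentiableAt_const _)]
    simp
  rw [hsecond, hsecond, hf.isSymmSndFDerivAt (by simp)]

theorem sum_pd_mul {Y : Fin 4 → V4 → ℝ} (hf : DifferentiableAt ℝ f x)
    (hY : ∀ α, DifferentiableAt ℝ (Y α) x) :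
    ∑ α, pd α (fun y => f y * Y α y) x = ∑ α, pd α f x * Y α x + f x * ∑ α, pd α (Y α) x := by
  simp only [pd_mul hf (hY _), Finset.sum_add_distrib, Finset.mul_sum]

theorem pd_sum_sum_mul_mul {A : Fin 4 → Fin 4 → V4 → ℝ} {u : Fin 4 → V4 → ℝ}
    (hA : ∀ ρ σ, DifferentiableAt ℝ (A ρ σ) x) (hAsymm : ∀ ρ σ, A ρ σ x = A σ ρ x)
    (hu : ∀ ρ, DifferentiableAt ℝ (u ρ) x) :
    pd i (fun y => ∑ ρ, ∑ σ, A ρ σ y * (u ρ y * u σ y)) x =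
      ∑ ρ, ∑ σ, pd i (A ρ σ) x * (u ρ x * u σ x) +
        2 * ∑ ρ, ∑ σ, A ρ σ x * pd i (u ρ) x * u σ x := by
  have hswap : ∑ ρ, ∑ σ, A ρ σ x * (u ρ x * pd i (u σ) x) =
      ∑ ρ, ∑ σ, A ρ σ x * pd i (u ρ) x * u σ x := by
    rw [Finset.sum_comm]
    exact Fintype.sum_congr _ _ fun ρ => Fintype.sum_congr _ _ fun σ => by rw [hAsymm]; ring
  simp (disch := first | fun_prop | intros; fun_prop) only [pd_sum, pd_mul]
  simp only [mul_add, Finset.sum_add_distrib, hswap]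
  simp only [mul_assoc]
  ring

end PartialDerivative

def flux (μb : V4 → ℝ) (Gb : V4 → Matrix (Fin 4) (Fin 4) ℝ) (f : V4 → ℝ) (α : Fin 4) :
    V4 → ℝ :=
  fun y => μb y * ∑ β, Gb y α β * pd β f y

def lagrangian (Vb : V4 → ℝ) (Gb : V4 → Matrix (Fin 4) (Fin 4) ℝ) (ψ : V4 → ℝ) : V4 → ℝ :=
  fun y => (1 / 2) * ((∑ ρ, ∑ σ, Gb y ρ σ * pd ρ ψ y * pd σ ψ y) + Vb y * ψ y ^ 2)

theorem mul_canonMomentum (μb Vb : V4 → ℝ) (Gb : V4 → Matrix (Fin 4) (Fin 4) ℝ)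
    (X : V4 → Fin 4 → ℝ) (q ψ : V4 → ℝ) (α : Fin 4) (y : V4) :
    μb y * canonMomentum Vb Gb X q ψ α y =
      -(∑ β, pd β ψ y * X y β + q y * ψ y) * flux μb Gb ψ α y +
        μb y * lagrangian Vb Gb ψ y * X y α + (1 / 2) * ψ y ^ 2 * flux μb Gb q α y := by
  have hδ : ∀ c : ℝ, ∑ β, (1 / 2) * (if α = β then 1 else 0) * c * X y β = (1 / 2) * c * X y α :=
    fun c => by simp
  simp only [canonMomentum, flux, lagrangian, add_mul, Finset.sum_add_distrib, hδ]
  simp only [Fin.sum_univ_four]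
  ring

section Divergence

variable {μb Vb q ψ : V4 → ℝ} {Gb : V4 → Matrix (Fin 4) (Fin 4) ℝ} {X : V4 → Fin 4 → ℝ}
  {x : V4}

theorem pd_neg_sum_mul_add_mul (hX : ∀ i, DifferentiableAt ℝ (fun y => X y i) x)
    (hψ : DifferentiableAt ℝ ψ x) (hdψ : ∀ β, DifferentiableAt ℝ (pd β ψ) x)
    (hq : DifferentiableAt ℝ q x) (α : Fin 4) :
    pd α (fun y => -(∑ β, pd β ψ y * X y β + q y * ψ y)) x =
      -(∑ β, (pd α (pd β ψ) x * X x β + pd β ψ x * pd α (fun y => X y β) x) +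
        (pd α q x * ψ x + q x * pd α ψ x)) := by
  simp (disch := first | fun_prop | intros; fun_prop) only [pd_neg, pd_add, pd_sum, pd_mul]

theorem pd_mul_lagrangian (hμ : DifferentiableAt ℝ μb x) (hV : DifferentiableAt ℝ Vb x)
    (hG : ∀ i j, DifferentiableAt ℝ (fun y => Gb y i j) x) (hGsymm : ∀ i j, Gb x i j = Gb x j i)
    (hψ : DifferentiableAt ℝ ψ x) (hdψ : ∀ β, DifferentiableAt ℝ (pd β ψ) x) (γ : Fin 4) :
    pd γ (fun y => μb y * lagrangian Vb Gb ψ y) x =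
      (1 / 2) * ((∑ ρ, ∑ σ, pd γ (fun y => μb y * Gb y ρ σ) x * (pd ρ ψ x * pd σ ψ x)) +
          pd γ (fun y => μb y * Vb y) x * ψ x ^ 2) +
        ((∑ ρ, ∑ σ, μb x * Gb x ρ σ * pd γ (pd ρ ψ) x * pd σ ψ x) +
          μb x * Vb x * ψ x * pd γ ψ x) := by
  have hμG : ∀ ρ σ, DifferentiableAt ℝ (fun y => μb y * Gb y ρ σ) x :=
    fun ρ σ => hμ.mul (hG ρ σ)
  have hμL : (fun y => μb y * lagrangian Vb Gb ψ y) = fun y => (1 / 2) *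
      ((∑ ρ, ∑ σ, μb y * Gb y ρ σ * (pd ρ ψ y * pd σ ψ y)) + μb y * Vb y * ψ y ^ 2) := by
    funext y
    have hμG : μb y * ∑ ρ, ∑ σ, Gb y ρ σ * pd ρ ψ y * pd σ ψ y =
        ∑ ρ, ∑ σ, μb y * Gb y ρ σ * (pd ρ ψ y * pd σ ψ y) := by
      simp only [Finset.mul_sum, mul_assoc]
    simp only [lagrangian]
    linear_combination (1 / 2) * hμG
  rw [hμL, pd_const_mul _ (by fun_prop), pd_add (by fun_prop) (by fun_prop),
    pd_sum_sum_mul_mul hμG (fun ρ σ => by rw [hGsymm]) hdψ,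
    pd_mul (f := fun y => μb y * Vb y) (hμ.mul hV) (hψ.fun_pow 2), pd_sq hψ]
  ring

theorem sum_mul_pd_mul_flux_comm (hGsymm : ∀ i j, Gb x i j = Gb x j i) :
    ∑ α, ψ x * pd α ψ x * flux μb Gb q α x = ψ x * ∑ α, pd α q x * flux μb Gb ψ α x := by
  simp only [flux, Finset.mul_sum]
  rw [Finset.sum_comm]
  refine Fintype.sum_congr _ _ fun β => Fintype.sum_congr _ _ fun α => ?_
  rw [hGsymm]
  ring

theorem sum_hessian_mul_flux (hψ : ContDiffAt ℝ 2 ψ x) :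
    ∑ α, (∑ β, pd α (pd β ψ) x * X x β) * flux μb Gb ψ α x =
      ∑ γ, (∑ ρ, ∑ σ, μb x * Gb x ρ σ * pd γ (pd ρ ψ) x * pd σ ψ x) * X x γ := by
  simp only [flux, Finset.mul_sum, Finset.sum_mul]
  conv_rhs => rw [Finset.sum_comm]; enter [2, ρ]; rw [Finset.sum_comm]
  refine Fintype.sum_congr _ _ fun ρ => Fintype.sum_congr _ _ fun σ =>
    Fintype.sum_congr _ _ fun γ => ?_
  rw [pd_comm hψ]
  ring

theorem sum_pd_vectorField_mul_flux (hGsymm : ∀ i j, Gb x i j = Gb x j i) :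
    ∑ α, (∑ β, pd β ψ x * pd α (fun y => X y β) x) * flux μb Gb ψ α x =
      μb x * ∑ α, ∑ β, (∑ γ, Gb x α γ * pd γ (fun y => X y β) x) * pd α ψ x * pd β ψ x := by
  simp only [flux, Finset.mul_sum, Finset.sum_mul]
  conv_rhs => enter [2, α]; rw [Finset.sum_comm]
  conv_rhs => rw [Finset.sum_comm]
  refine Fintype.sum_congr _ _ fun γ => Fintype.sum_congr _ _ fun α =>
    Fintype.sum_congr _ _ fun β => ?_
  rw [hGsymm]
  ring

set_option maxHeartbeats 400000 in
theorem divergence_of_generalized_momentum_at (hμ : DifferentiableAt ℝ μb x) (hμ0 : μb x ≠ 0)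
    (hV : DifferentiableAt ℝ Vb x) (hG : ∀ i j, DifferentiableAt ℝ (fun y => Gb y i j) x)
    (hGsymm : ∀ i j, Gb x i j = Gb x j i) (hX : ∀ i, DifferentiableAt ℝ (fun y => X y i) x)
    (hq : ContDiffAt ℝ 2 q x) (hψ : ContDiffAt ℝ 2 ψ x)
    (hsol : ∑ α, pd α (flux μb Gb ψ α) x = μb x * (Vb x * ψ x)) :
    (μb x)⁻¹ * (∑ α, pd α (fun y => μb y * canonMomentum Vb Gb X q ψ α y) x) =
      (∑ α, ∑ β,
          (-(∑ γ, Gb x α γ * pd γ (fun y => X y β) x) +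
            (1 / 2) * (∑ γ, pd γ (fun y => X y γ) x) * Gb x α β +
            (1 / 2) * (μb x)⁻¹ * ∑ γ, X x γ * pd γ (fun y => μb y * Gb y α β) x) *
          pd α ψ x * pd β ψ x) +
        ((1 / 2) * (∑ γ, pd γ (fun y => X y γ) x) * Vb x +
          (1 / 2) * (μb x)⁻¹ * ∑ γ, X x γ * pd γ (fun y => μb y * Vb y) x) * ψ x ^ 2 -
        q x * ((∑ α, ∑ β, Gb x α β * pd α ψ x * pd β ψ x) + Vb x * ψ x ^ 2) +
        (1 / 2) * (μb x)⁻¹ * (∑ α, pd α (flux μb Gb q α) x) * ψ x ^ 2 := by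
  have hψ1 : DifferentiableAt ℝ ψ x := hψ.differentiableAt two_ne_zero
  have hq1 : DifferentiableAt ℝ q x := hq.differentiableAt two_ne_zero
  have hdψ : ∀ β, DifferentiableAt ℝ (pd β ψ) x :=
    fun β => (contDiffAt_pd hψ β).differentiableAt one_ne_zero
  have hdq : ∀ β, DifferentiableAt ℝ (pd β q) x :=
    fun β => (contDiffAt_pd hq β).differentiableAt one_ne_zero
  have hF : ∀ α, DifferentiableAt ℝ (flux μb Gb ψ α) x := fun α => by unfold flux; fun_prop
  have hFq : ∀ α, DifferentiableAt ℝ (flux μb Gb q α) x := fun α => by unfold flux; fun_prop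
  have hL : DifferentiableAt ℝ (fun y => μb y * lagrangian Vb Gb ψ y) x := by
    unfold lagrangian; fun_prop
  simp only [mul_canonMomentum]
  simp (disch := fun_prop) only [pd_add]
  rw [Finset.sum_add_distrib, Finset.sum_add_distrib, sum_pd_mul (by fun_prop) hF,
    sum_pd_mul hL hX, sum_pd_mul (by fun_prop) hFq, hsol]
  simp only [pd_neg_sum_mul_add_mul hX hψ1 hdψ hq1, pd_mul_lagrangian hμ hV hG hGsymm hψ1 hdψ,
    pd_const_mul _ (hψ1.fun_pow 2), pd_sq hψ1]
  have hHess := sum_hessian_mul_flux (μb := μb) (Gb := Gb) (X := X) hψ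
  have hTransport := sum_pd_vectorField_mul_flux (μb := μb) (ψ := ψ) (X := X) hGsymm
  have hCross := sum_mul_pd_mul_flux_comm (μb := μb) (ψ := ψ) (q := q) hGsymm
  -- `hHess` cancels the second derivatives of `ψ`, `hCross` the `ψ ∂q` terms, and
  -- `hTransport` turns the `∂X` terms into the shape of the right-hand side.
  simp only [flux, lagrangian, Fin.sum_univ_four] at hHess hTransport hCross ⊢
  field_simp
  linear_combination (-2) * hHess + (-2) * hTransport + 2 * hCross

end Divergence

/-- **Lemma 2.1 (Divergence of generalized momenta).** -/
theorem divergence_of_generalized_momentum (U : Set V4) (hU : IsOpen U)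
    (μb Vb q : V4 → ℝ) (Gb : V4 → Matrix (Fin 4) (Fin 4) ℝ) (X : V4 → Fin 4 → ℝ)
    (ψ : V4 → ℝ)
    (hμ : ContDiffOn ℝ (⊤ : ℕ∞) μb U) (hμpos : ∀ x ∈ U, 0 < μb x)
    (hV : ContDiffOn ℝ (⊤ : ℕ∞) Vb U)
    (hG : ∀ i j, ContDiffOn ℝ (⊤ : ℕ∞) (fun x => Gb x i j) U)
    (hGsymm : ∀ x ∈ U, ∀ i j, Gb x i j = Gb x j i)
    (hX : ∀ i, ContDiffOn ℝ (⊤ : ℕ∞) (fun x => X x i) U)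
    (hq : ContDiffOn ℝ (⊤ : ℕ∞) q U) (hψ : ContDiffOn ℝ (⊤ : ℕ∞) ψ U)
    (hsol : ∀ x ∈ U,
      (μb x)⁻¹ * (∑ α, pd α (fun y => μb y * ∑ β, Gb y α β * pd β ψ y) x) -
        Vb x * ψ x = 0) :
    ∀ x ∈ U,
      (μb x)⁻¹ * (∑ α, pd α (fun y => μb y * canonMomentum Vb Gb X q ψ α y) x) =
        (∑ α, ∑ β,
            (-(∑ γ, Gb x α γ * pd γ (fun y => X y β) x) +
              (1 / 2) * (∑ γ, pd γ (fun y => X y γ) x) * Gb x α β +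
              (1 / 2) * (μb x)⁻¹ * ∑ γ, X x γ * pd γ (fun y => μb y * Gb y α β) x) *
            pd α ψ x * pd β ψ x) +
          ((1 / 2) * (∑ γ, pd γ (fun y => X y γ) x) * Vb x +
            (1 / 2) * (μb x)⁻¹ * ∑ γ, X x γ * pd γ (fun y => μb y * Vb y) x) * ψ x ^ 2 -
          q x * ((∑ α, ∑ β, Gb x α β * pd α ψ x * pd β ψ x) + Vb x * ψ x ^ 2) +
          (1 / 2) * (μb x)⁻¹ *
            (∑ α, pd α (fun y => μb y * ∑ β, Gb y α β * pd β q y) x) * ψ x ^ 2 := by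
  intro x hx
  have hxU : U ∈ 𝓝 x := hU.mem_nhds hx
  have hdiff : ∀ {f : V4 → ℝ}, ContDiffOn ℝ (⊤ : ℕ∞) f U → DifferentiableAt ℝ f x :=
    fun hf => (hf.contDiffAt hxU).differentiableAt (by simp)
  have hC2 : ∀ {f : V4 → ℝ}, ContDiffOn ℝ (⊤ : ℕ∞) f U → ContDiffAt ℝ 2 f x :=
    fun hf => (hf.contDiffAt hxU).of_le (WithTop.coe_le_coe.mpr le_top)
  have hμ0 : μb x ≠ 0 := (hμpos x hx).ne'
  have hdivF : ∑ α, pd α (flux μb Gb ψ α) x = μb x * (Vb x * ψ x) := by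
    have h := hsol x hx
    rwa [sub_eq_zero, inv_mul_eq_iff_eq_mul₀ hμ0] at h
  exact divergence_of_generalized_momentum_at (hdiff hμ) hμ0 (hdiff hV)
    (fun i j => hdiff (hG i j)) (hGsymm x hx) (fun i => hdiff (hX i)) (hC2 hq) (hC2 hψ) hdivF

end KerrPaper
end
end

section
/- Weighted Hardy estimate (Lemma 3.7): For each M > 0 there exist positive constants ā and ε, depending only on M, such that if |a| < ā, then for every function φ : [r₊,∞) → ℝ that is bounded and smooth (smooth on the interior with all derivatives extending continuously to r₊) and for which the right-hand integral is finite, one has ∫_{r₊}^{∞} [Δ²/(r²(r²+a²))·φ′(r)² + (1/6)·((9r² − 46Mr + 54M²)/r⁴)·φ(r)²] dr ≥ ε·∫_{r₊}^{∞} [Δ²/(r²(r²+a²))·φ′(r)² + r⁻²·φ(r)²] dr. -/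
noncomputable section

open MeasureTheory Filter Topology

/-!
Multiplier method. For `f = (4r/5 - 59M/50) Δ / r⁴` the integral of `(f φ²)' = f' φ² + 2 f φ φ'`
over `(r₊, ∞)` vanishes, since `Δ(r₊) = 0`, `f → 0` at infinity and `φ` is bounded. Adding it to
the difference of the two sides (with `ε = 1/100`) leaves the integral of the quadratic form
`(1 - ε) D φ'² + 2 f φ φ' + (g - ε r⁻² + f') φ²` in `(φ', φ)`, where `D = Δ²/(r²(r²+a²))` and `g`
is the weight. Its discriminant is `-Δ²/(10⁴ r⁸ (r²+a²))` times an explicit quartic in `r` which is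
nonnegative for `r ≥ 19M/10`, and `r₊ ≥ 19M/10` as soon as `|a| ≤ M/10`.
-/

open Set

lemma quadratic_form_nonneg {A B C X Y : ℝ} (hA : 0 < A) (h : B ^ 2 ≤ A * C) :
    0 ≤ A * X ^ 2 + 2 * B * X * Y + C * Y ^ 2 := by
  nlinarith [sq_nonneg (A * X + B * Y), mul_le_mul_of_nonneg_right h (sq_nonneg Y)]

lemma abs_multiplier_term_le {D c F F' X Y : ℝ} (hD : 0 < D) (hF : F ^ 2 ≤ c * D) :
    |F' * Y ^ 2 + F * (2 * Y * X)| ≤ D * X ^ 2 + (|F'| + c) * Y ^ 2 := by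
  have hcross : |F * (2 * Y * X)| ≤ D * X ^ 2 + c * Y ^ 2 := by
    rw [abs_le]
    constructor <;>
      nlinarith [sq_nonneg (D * X + F * Y), sq_nonneg (D * X - F * Y),
        mul_le_mul_of_nonneg_right hF (sq_nonneg Y)]
  calc |F' * Y ^ 2 + F * (2 * Y * X)| ≤ |F' * Y ^ 2| + |F * (2 * Y * X)| := abs_add_le _ _
    _ ≤ |F'| * Y ^ 2 + (D * X ^ 2 + c * Y ^ 2) := by
      rw [abs_mul, abs_of_nonneg (sq_nonneg Y)]; gcongr
    _ = D * X ^ 2 + (|F'| + c) * Y ^ 2 := by ring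

section Multiplier

variable {r₀ : ℝ} {f f' φ : ℝ → ℝ}

lemma integral_Ioi_deriv_mul_sq_eq_zero (hfd : ∀ r ∈ Ioi r₀, HasDerivAt f (f' r) r)
    (hfc : ContinuousWithinAt f (Ici r₀) r₀) (hfr₀ : f r₀ = 0) (hftop : Tendsto f atTop (𝓝 0))
    (hφc : ContinuousOn φ (Ici r₀)) (hφd : ∀ r ∈ Ioi r₀, DifferentiableAt ℝ φ r)
    (hφB : ∃ B, ∀ r ∈ Ici r₀, |φ r| ≤ B)
    (hint : IntegrableOn (fun r => f' r * φ r ^ 2 + f r * (2 * φ r * deriv φ r)) (Ioi r₀)) :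
    ∫ r in Ioi r₀, (f' r * φ r ^ 2 + f r * (2 * φ r * deriv φ r)) = 0 := by
  obtain ⟨B, hB⟩ := hφB
  have hderiv : ∀ r ∈ Ioi r₀, HasDerivAt (fun s => f s * φ s ^ 2)
      (f' r * φ r ^ 2 + f r * (2 * φ r * deriv φ r)) r := fun r hr => by
    refine ((hfd r hr).mul ((hφd r hr).hasDerivAt.pow 2)).congr_deriv ?_
    simp only [Pi.pow_apply]; push_cast; ring
  have hbdd : IsBoundedUnder (· ≤ ·) atTop fun r => ‖φ r ^ 2‖ := by
    refine isBoundedUnder_of_eventually_le (a := B ^ 2) ?_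
    filter_upwards [eventually_ge_atTop r₀] with r hr
    rw [norm_pow, Real.norm_eq_abs]
    exact pow_le_pow_left₀ (abs_nonneg _) (hB r hr) 2
  rw [integral_Ioi_of_hasDerivAt_of_tendsto (hfc.mul ((hφc r₀ self_mem_Ici).pow 2)) hderiv hint
    (hftop.zero_mul_isBoundedUnder_le hbdd)]
  simp [hfr₀]

theorem le_integral_of_multiplier {ε K : ℝ} {D g c : ℝ → ℝ}
    (hDm : Measurable D) (hgm : Measurable g) (hf'm : Measurable f')
    (hfd : ∀ r ∈ Ioi r₀, HasDerivAt f (f' r) r) (hfc : ContinuousWithinAt f (Ici r₀) r₀)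
    (hfr₀ : f r₀ = 0) (hftop : Tendsto f atTop (𝓝 0))
    (hφc : ContinuousOn φ (Ici r₀)) (hφd : ∀ r ∈ Ioi r₀, DifferentiableAt ℝ φ r)
    (hφB : ∃ B, ∀ r ∈ Ici r₀, |φ r| ≤ B)
    (hD : ∀ r ∈ Ioi r₀, 0 < D r) (hc : ∀ r ∈ Ioi r₀, 0 ≤ c r)
    (hg : ∀ r ∈ Ioi r₀, |g r| ≤ K * c r) (hf' : ∀ r ∈ Ioi r₀, |f' r| ≤ K * c r)
    (hf : ∀ r ∈ Ioi r₀, f r ^ 2 ≤ c r * D r) (hε : ε < 1)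
    (hdisc : ∀ r ∈ Ioi r₀, f r ^ 2 ≤ (1 - ε) * D r * (g r - ε * c r + f' r))
    (hint : IntegrableOn (fun r => D r * deriv φ r ^ 2 + c r * φ r ^ 2) (Ioi r₀)) :
    ε * ∫ r in Ioi r₀, (D r * deriv φ r ^ 2 + c r * φ r ^ 2) ≤
      ∫ r in Ioi r₀, (D r * deriv φ r ^ 2 + g r * φ r ^ 2) := by
  have hφm : AEStronglyMeasurable φ (volume.restrict (Ioi r₀)) :=
    (hφc.mono Ioi_subset_Ici_self).aestronglyMeasurable measurableSet_Ioi
  have hfm : AEStronglyMeasurable f (volume.restrict (Ioi r₀)) :=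
    ContinuousOn.aestronglyMeasurable (fun r hr => (hfd r hr).continuousAt.continuousWithinAt)
      measurableSet_Ioi
  have hφ'm := (measurable_deriv φ).aestronglyMeasurable (μ := volume.restrict (Ioi r₀))
  obtain ⟨hDX, hcY⟩ := (integrable_add_iff_of_nonneg (f := fun r => D r * deriv φ r ^ 2)
    (g := fun r => c r * φ r ^ 2) (by fun_prop)
    (by filter_upwards [ae_restrict_mem measurableSet_Ioi] with r hr
        exact mul_nonneg (hD r hr).le (sq_nonneg _))
    (by filter_upwards [ae_restrict_mem measurableSet_Ioi] with r hr
        exact mul_nonneg (hc r hr) (sq_nonneg _))).1 hint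
  have hL : IntegrableOn (fun r => D r * deriv φ r ^ 2 + g r * φ r ^ 2) (Ioi r₀) := by
    refine hDX.add ((hcY.const_mul K).mono' (by fun_prop) ?_)
    filter_upwards [ae_restrict_mem measurableSet_Ioi] with r hr
    rw [norm_mul, norm_pow, Real.norm_eq_abs, Real.norm_eq_abs, sq_abs, ← mul_assoc]
    exact mul_le_mul_of_nonneg_right (hg r hr) (sq_nonneg _)
  have hF : IntegrableOn (fun r => f' r * φ r ^ 2 + f r * (2 * φ r * deriv φ r)) (Ioi r₀) := by
    refine (hint.add (hcY.const_mul K)).mono' (by fun_prop) ?_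
    filter_upwards [ae_restrict_mem measurableSet_Ioi] with r hr
    refine (abs_multiplier_term_le (hD r hr) (hf r hr)).trans ?_
    simp only [Pi.add_apply]
    nlinarith [mul_le_mul_of_nonneg_right (hf' r hr) (sq_nonneg (φ r))]
  have hnonneg : 0 ≤ ∫ r in Ioi r₀, ((D r * deriv φ r ^ 2 + g r * φ r ^ 2) -
      ε * (D r * deriv φ r ^ 2 + c r * φ r ^ 2) +
      (f' r * φ r ^ 2 + f r * (2 * φ r * deriv φ r))) := by
    refine setIntegral_nonneg measurableSet_Ioi fun r hr => ?_
    have hA : 0 < (1 - ε) * D r := mul_pos (by linarith) (hD r hr)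
    have := quadratic_form_nonneg (X := deriv φ r) (Y := φ r) hA (hdisc r hr)
    linarith
  have hsplit := integral_add (hL.sub (hint.const_mul ε)) hF
  simp only [Pi.sub_apply] at hsplit
  rw [integral_sub hL (hint.const_mul ε), integral_const_mul,
    integral_Ioi_deriv_mul_sq_eq_zero hfd hfc hfr₀ hftop hφc hφd hφB hF] at hsplit
  linarith

end Multiplier

namespace KerrPaper

lemma Δk_rplus {M a : ℝ} (h : a ^ 2 ≤ M ^ 2) : Δk M a (rplus M a) = 0 := by
  unfold Δk rplus
  linear_combination Real.sq_sqrt (sub_nonneg.2 h)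

lemma Δk_pos_of_rplus_lt {M a r : ℝ} (h : a ^ 2 ≤ M ^ 2) (hr : rplus M a < r) :
    0 < Δk M a r := by
  have hs := Real.sq_sqrt (sub_nonneg.2 h)
  have := Real.sqrt_nonneg (M ^ 2 - a ^ 2)
  unfold rplus at hr
  unfold Δk
  nlinarith [mul_pos (sub_pos.2 hr) (by linarith : 0 < r - M + Real.sqrt (M ^ 2 - a ^ 2))]

lemma le_rplus {M a : ℝ} (ha : a ^ 2 ≤ M ^ 2 / 100) : 19 * M / 10 ≤ rplus M a := by
  have : 9 * M / 10 ≤ Real.sqrt (M ^ 2 - a ^ 2) :=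
    Real.le_sqrt_of_sq_le (by nlinarith)
  unfold rplus
  linarith

@[fun_prop]
lemma continuous_Δk (M a : ℝ) : Continuous (Δk M a) := by
  unfold Δk; fun_prop

def hardyMultiplier (M a r : ℝ) : ℝ := (4 / 5 * r - 59 / 50 * M) * Δk M a r / r ^ 4

def hardyMultiplierDeriv (M a r : ℝ) : ℝ :=
  (4 / 5 * Δk M a r + (4 / 5 * r - 59 / 50 * M) * (2 * r - 2 * M)) / r ^ 4 -
    4 * (4 / 5 * r - 59 / 50 * M) * Δk M a r / r ^ 5

lemma hasDerivAt_hardyMultiplier (M a : ℝ) {r : ℝ} (hr : r ≠ 0) :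
    HasDerivAt (hardyMultiplier M a) (hardyMultiplierDeriv M a r) r := by
  have hp : HasDerivAt (fun s => 4 / 5 * s - 59 / 50 * M) (4 / 5) r := by
    simpa using ((hasDerivAt_id r).const_mul (4 / 5 : ℝ)).sub_const (59 / 50 * M)
  have hΔ : HasDerivAt (Δk M a) (2 * r - 2 * M) r := by
    refine (((hasDerivAt_pow 2 r).sub ((hasDerivAt_id r).const_mul (2 * M))).add_const
      (a ^ 2)).congr_deriv ?_
    push_cast; ring
  refine ((hp.mul hΔ).div (hasDerivAt_pow 4 r) (pow_ne_zero 4 hr)).congr_deriv ?_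
  unfold hardyMultiplierDeriv
  simp only [Pi.mul_apply]
  field_simp
  ring

lemma tendsto_hardyMultiplier_atTop (M a : ℝ) : Tendsto (hardyMultiplier M a) atTop (𝓝 0) := by
  have hpoly : Tendsto (fun x : ℝ => x * (4 / 5 - 139 / 50 * M * x +
      (4 / 5 * a ^ 2 + 59 / 25 * M ^ 2) * x ^ 2 - 59 / 50 * M * a ^ 2 * x ^ 3)) (𝓝 0) (𝓝 0) := by
    simpa using ((by fun_prop : Continuous fun x : ℝ => x * (4 / 5 - 139 / 50 * M * x +
      (4 / 5 * a ^ 2 + 59 / 25 * M ^ 2) * x ^ 2 - 59 / 50 * M * a ^ 2 * x ^ 3)).tendsto 0)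
  refine (hpoly.comp tendsto_inv_atTop_zero).congr' ?_
  filter_upwards [eventually_ne_atTop 0] with r hr
  simp only [Function.comp_apply, hardyMultiplier, Δk]
  field_simp
  ring

section Bounds

variable {M a r : ℝ} (hM : 0 < M) (hr : 19 * M / 10 ≤ r)
include hM hr

lemma abs_weight_le :
    |1 / 6 * ((9 * r ^ 2 - 46 * M * r + 54 * M ^ 2) / r ^ 4)| ≤ 19 * (r ^ 2)⁻¹ := by
  have hr0 : 0 < r := by linarith
  have hnum : |9 * r ^ 2 - 46 * M * r + 54 * M ^ 2| ≤ 114 * r ^ 2 := by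
    rw [abs_le]; constructor <;> nlinarith [mul_pos hM hr0]
  rw [show 1 / 6 * ((9 * r ^ 2 - 46 * M * r + 54 * M ^ 2) / r ^ 4) =
      (9 * r ^ 2 - 46 * M * r + 54 * M ^ 2) / (6 * r ^ 4) by ring, abs_div,
    abs_of_pos (by positivity : (0 : ℝ) < 6 * r ^ 4)]
  calc _ ≤ 114 * r ^ 2 / (6 * r ^ 4) := by gcongr
    _ = 19 * (r ^ 2)⁻¹ := by field_simp; norm_num

variable (ha : a ^ 2 ≤ M ^ 2 / 100)
include ha

lemma abs_hardyMultiplierDeriv_le : |hardyMultiplierDeriv M a r| ≤ 2 * (r ^ 2)⁻¹ := by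
  have hr0 : 0 < r := by linarith
  have heq : hardyMultiplierDeriv M a r = (-4 / 5 * r ^ 3 + 139 / 25 * M * r ^ 2 -
      177 / 25 * M ^ 2 * r - 12 / 5 * a ^ 2 * r + 118 / 25 * M * a ^ 2) / r ^ 5 := by
    unfold hardyMultiplierDeriv Δk; field_simp; ring
  have hnum : |-4 / 5 * r ^ 3 + 139 / 25 * M * r ^ 2 - 177 / 25 * M ^ 2 * r - 12 / 5 * a ^ 2 * r +
      118 / 25 * M * a ^ 2| ≤ 2 * r ^ 3 := by
    rw [abs_le]; constructor <;>
      nlinarith [mul_pos hM hr0, sq_nonneg a, mul_le_mul_of_nonneg_left ha hr0.le,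
        mul_le_mul_of_nonneg_left ha hM.le, mul_nonneg (sq_nonneg a) hM.le,
        mul_nonneg (sq_nonneg a) hr0.le, mul_nonneg (mul_pos hM hr0).le (sub_nonneg.2 hr)]
  rw [heq, abs_div, abs_of_pos (by positivity : (0 : ℝ) < r ^ 5)]
  calc _ ≤ 2 * r ^ 3 / r ^ 5 := by gcongr
    _ = 2 * (r ^ 2)⁻¹ := by field_simp

lemma hardyMultiplier_sq_le :
    hardyMultiplier M a r ^ 2 ≤ (r ^ 2)⁻¹ * (Δk M a r ^ 2 / (r ^ 2 * (r ^ 2 + a ^ 2))) := by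
  have hr0 : 0 < r := by linarith
  have hp : (4 / 5 * r - 59 / 50 * M) ^ 2 * (r ^ 2 + a ^ 2) ≤ r ^ 4 := by
    nlinarith [mul_pos hM hr0, sq_nonneg a, mul_le_mul_of_nonneg_left ha (sq_nonneg r),
      mul_le_mul_of_nonneg_left ha (sq_nonneg M), mul_nonneg (sq_nonneg a) (mul_pos hM hr0).le,
      mul_nonneg (mul_pos hM hr0).le (sub_nonneg.2 hr)]
  have hid : (r ^ 2)⁻¹ * (Δk M a r ^ 2 / (r ^ 2 * (r ^ 2 + a ^ 2))) - hardyMultiplier M a r ^ 2 =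
      (r ^ 4 - (4 / 5 * r - 59 / 50 * M) ^ 2 * (r ^ 2 + a ^ 2)) * Δk M a r ^ 2 /
        (r ^ 8 * (r ^ 2 + a ^ 2)) := by
    unfold hardyMultiplier; field_simp
  rw [← sub_nonneg, hid]
  exact div_nonneg (mul_nonneg (by linarith) (sq_nonneg _)) (by positivity)

lemma hardy_quartic_nonneg :
    0 ≤ 431 * r ^ 4 - 1976 * M * r ^ 3 + 5084 * M ^ 2 * r ^ 2 - 30160 * a ^ 2 * r ^ 2 +
      65608 * a ^ 2 * M * r - 13924 * a ^ 2 * M ^ 2 := by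
  have hr0 : 0 < r := by linarith
  nlinarith [mul_nonneg (sq_nonneg (431 * r - 988 * M)) (sq_nonneg r),
    mul_le_mul_of_nonneg_right ha (sq_nonneg r), mul_le_mul_of_nonneg_right ha (sq_nonneg M),
    mul_nonneg (sq_nonneg a) (mul_pos hM hr0).le, mul_pos (mul_pos hM hM) (mul_pos hr0 hr0),
    mul_nonneg (mul_nonneg (sq_nonneg M) (sub_nonneg.2 hr))
      (by positivity : (0 : ℝ) ≤ r + 19 * M / 10)]

lemma hardyMultiplier_discriminant_nonpos :
    hardyMultiplier M a r ^ 2 ≤ (1 - 1 / 100) * (Δk M a r ^ 2 / (r ^ 2 * (r ^ 2 + a ^ 2))) *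
      (1 / 6 * ((9 * r ^ 2 - 46 * M * r + 54 * M ^ 2) / r ^ 4) - 1 / 100 * (r ^ 2)⁻¹ +
        hardyMultiplierDeriv M a r) := by
  have hr0 : 0 < r := by linarith
  have hid : (1 - 1 / 100) * (Δk M a r ^ 2 / (r ^ 2 * (r ^ 2 + a ^ 2))) *
      (1 / 6 * ((9 * r ^ 2 - 46 * M * r + 54 * M ^ 2) / r ^ 4) - 1 / 100 * (r ^ 2)⁻¹ +
        hardyMultiplierDeriv M a r) - hardyMultiplier M a r ^ 2 =
      (431 * r ^ 4 - 1976 * M * r ^ 3 + 5084 * M ^ 2 * r ^ 2 - 30160 * a ^ 2 * r ^ 2 +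
        65608 * a ^ 2 * M * r - 13924 * a ^ 2 * M ^ 2) * Δk M a r ^ 2 /
          (10000 * r ^ 8 * (r ^ 2 + a ^ 2)) := by
    unfold hardyMultiplier hardyMultiplierDeriv Δk; field_simp; ring
  rw [← sub_nonneg, hid]
  exact div_nonneg (mul_nonneg (hardy_quartic_nonneg hM hr ha) (sq_nonneg _)) (by positivity)

end Bounds

/-- **Lemma 3.7 (Weighted Hardy estimate).** -/
theorem weighted_hardy (M : ℝ) (hM : 0 < M) :
    ∃ abar ε : ℝ, 0 < abar ∧ abar ≤ M ∧ 0 < ε ∧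
      ∀ a : ℝ, |a| < abar →
        ∀ φ : ℝ → ℝ, ContDiffOn ℝ (⊤ : ℕ∞) φ (Set.Ici (rplus M a)) →
          (∃ B : ℝ, ∀ r ∈ Set.Ici (rplus M a), |φ r| ≤ B) →
          MeasureTheory.IntegrableOn
            (fun r => Δk M a r ^ 2 / (r ^ 2 * (r ^ 2 + a ^ 2)) * deriv φ r ^ 2 +
              (r ^ 2)⁻¹ * φ r ^ 2)
            (Set.Ioi (rplus M a)) →
            ε * ∫ r in Set.Ioi (rplus M a),
                (Δk M a r ^ 2 / (r ^ 2 * (r ^ 2 + a ^ 2)) * deriv φ r ^ 2 +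
                  (r ^ 2)⁻¹ * φ r ^ 2) ≤
              ∫ r in Set.Ioi (rplus M a),
                (Δk M a r ^ 2 / (r ^ 2 * (r ^ 2 + a ^ 2)) * deriv φ r ^ 2 +
                  1 / 6 * ((9 * r ^ 2 - 46 * M * r + 54 * M ^ 2) / r ^ 4) * φ r ^ 2) := by
  refine ⟨M / 10, 1 / 100, by positivity, by linarith, by norm_num, fun a ha φ hφ hφB hint => ?_⟩
  have ha2 : a ^ 2 ≤ M ^ 2 / 100 := by nlinarith [abs_nonneg a, sq_abs a]
  have haM : a ^ 2 ≤ M ^ 2 := by nlinarith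
  have hrplus : 0 < rplus M a := by linarith [le_rplus ha2]
  have hr : ∀ r ∈ Ioi (rplus M a), 19 * M / 10 ≤ r := fun r h => (le_rplus ha2).trans h.out.le
  have hr0 : ∀ r ∈ Ioi (rplus M a), 0 < r := fun r h => hrplus.trans h
  refine le_integral_of_multiplier (K := 19) (f := hardyMultiplier M a)
    (by fun_prop) (by fun_prop) (by unfold hardyMultiplierDeriv; fun_prop)
    (fun r h => hasDerivAt_hardyMultiplier M a (hr0 r h).ne')
    (hasDerivAt_hardyMultiplier M a hrplus.ne').continuousAt.continuousWithinAt
    (by simp [hardyMultiplier, Δk_rplus haM]) (tendsto_hardyMultiplier_atTop M a)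
    hφ.continuousOn
    (fun r h => (hφ.differentiableOn (by simp)).differentiableAt (Ici_mem_nhds h)) hφB
    (fun r h => by have := Δk_pos_of_rplus_lt haM h; have := hr0 r h; positivity)
    (fun r _ => by positivity) (fun r h => abs_weight_le hM (hr r h))
    (fun r h => (abs_hardyMultiplierDeriv_le hM (hr r h) ha2).trans (by gcongr; norm_num))
    (fun r h => hardyMultiplier_sq_le hM (hr r h) ha2) (by norm_num)
    (fun r h => hardyMultiplier_discriminant_nonpos hM (hr r h) ha2) hint

end KerrPaper
end
end

section
/- Positivity of a quadratic form from a positive ODE solution (Step 1 of the Hardy lemma): Let r₀ ∈ ℝ and let A, V : [r₀,∞) → ℝ be smooth with A > 0 on [r₀,∞). Suppose the ordinary differential equation −(A u′)′ + V u = 0 has a smooth positive solution u on [r₀,∞). Then for every smooth function φ : [r₀,∞) → ℝ such that the quantity φ²·A·(u′/u) tends to 0 as r → r₀⁺ and as r → ∞, and for which the integral below converges, one has ∫_{r₀}^{∞} (A·φ′(r)² + V·φ(r)²) dr ≥ 0. -/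
noncomputable section

open MeasureTheory Filter Topology

namespace KerrPaper

/-! Picone's identity: for `w = φ² A u'/u` the equation `(A u')' = V u` gives
`w' = A φ'² + V φ² - A (φ' - φ u'/u)²`, so `w' ≤ A φ'² + V φ²` wherever `A > 0`.
Integrating this over `(r₀, ∞)`, the boundary values of `w` vanish by hypothesis. -/

section

open Set

theorem intervalIntegral_tendsto_integral_Ioi_of_tendsto_nhdsGT {ι : Type*} {l : Filter ι}
    [l.IsCountablyGenerated] {s t : ι → ℝ} {a : ℝ} {f : ℝ → ℝ} (hf : IntegrableOn f (Ioi a))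
    (hs : Tendsto s l (𝓝[>] a)) (ht : Tendsto t l atTop) :
    Tendsto (fun i => ∫ x in s i..t i, f x) l (𝓝 (∫ x in Ioi a, f x)) := by
  have hcover : AECover (volume.restrict (Ioi a)) l fun i => Ioi (s i) ∩ Iic (t i) :=
    (aecover_Ioi_of_Ioi (hs.mono_right nhdsWithin_le_nhds)).inter (aecover_Iic ht)
  refine (hcover.integral_tendsto_of_countably_generated hf).congr' ?_
  filter_upwards [hs (Ioo_mem_nhdsGT (lt_add_one a)),
    ht.eventually (eventually_gt_atTop (a + 1))] with i ⟨has, hs1⟩ ht1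
  rw [Ioi_inter_Iic, Measure.restrict_restrict measurableSet_Ioc,
    inter_eq_left.2 (Ioc_subset_Ioi_self.trans (Ioi_subset_Ioi has.le)),
    intervalIntegral.integral_of_le (hs1.trans ht1).le]

theorem sub_le_integral_Ioi_of_hasDerivAt_of_le {a l m : ℝ} {w w' f : ℝ → ℝ}
    (hderiv : ∀ x ∈ Ioi a, HasDerivAt w (w' x) x) (hle : ∀ x ∈ Ioi a, w' x ≤ f x)
    (hf : IntegrableOn f (Ioi a)) (hl : Tendsto w (𝓝[>] a) (𝓝 l))
    (hm : Tendsto w atTop (𝓝 m)) :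
    m - l ≤ ∫ x in Ioi a, f x := by
  have hends : Tendsto (fun p : ℝ × ℝ => w p.2 - w p.1) (𝓝[>] a ×ˢ atTop) (𝓝 (m - l)) :=
    (hm.comp tendsto_snd).sub (hl.comp tendsto_fst)
  refine le_of_tendsto_of_tendsto hends
    (intervalIntegral_tendsto_integral_Ioi_of_tendsto_nhdsGT hf tendsto_fst tendsto_snd) ?_
  filter_upwards [prod_mem_prod (Ioo_mem_nhdsGT (lt_add_one a)) (Ioi_mem_atTop (a + 1))]
    with ⟨s, t⟩ ⟨⟨has, hs1⟩, (ht1 : a + 1 < t)⟩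
  have hsub : Icc s t ⊆ Ioi a := fun x hx => has.trans_le hx.1
  exact intervalIntegral.sub_le_integral_of_hasDeriv_right_of_le (hs1.trans ht1).le
    (fun x hx => (hderiv x (hsub hx)).continuousAt.continuousWithinAt)
    (fun x hx => (hderiv x (hsub (Ioo_subset_Icc_self hx))).hasDerivWithinAt)
    (hf.mono_set hsub) (fun x hx => hle x (hsub (Ioo_subset_Icc_self hx)))

end

theorem hasDerivAt_picone {A u φ : ℝ → ℝ} {x q : ℝ} (hφ : DifferentiableAt ℝ φ x)
    (hu : DifferentiableAt ℝ u x) (hux : u x ≠ 0)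
    (hflux : HasDerivAt (fun s => A s * deriv u s) (q * u x) x) :
    HasDerivAt (fun s => φ s ^ 2 * A s * (deriv u s / u s))
      (A x * deriv φ x ^ 2 + q * φ x ^ 2 - A x * (deriv φ x - φ x * deriv u x / u x) ^ 2) x := by
  have h := (hφ.hasDerivAt.fun_pow 2).fun_mul (hflux.fun_div hu.hasDerivAt hux)
  have hfun : (fun s => φ s ^ 2 * A s * (deriv u s / u s)) =
      fun s => φ s ^ 2 * (A s * deriv u s / u s) := by
    funext s; ring
  rw [hfun]
  refine h.congr_deriv ?_
  field_simp
  ring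

theorem hardy_from_positive_solution_general (r₀ : ℝ) (A V u : ℝ → ℝ)
    (hA : ContDiffOn ℝ (⊤ : ℕ∞) A (Set.Ici r₀))
    (hApos : ∀ r ∈ Set.Ici r₀, 0 < A r)
    (hu : ContDiffOn ℝ (⊤ : ℕ∞) u (Set.Ici r₀)) (hupos : ∀ r ∈ Set.Ici r₀, 0 < u r)
    (hODE : ∀ r ∈ Set.Ici r₀, deriv (fun s => A s * deriv u s) r = V r * u r) :
    ∀ φ : ℝ → ℝ, ContDiffOn ℝ (⊤ : ℕ∞) φ (Set.Ici r₀) →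
      Filter.Tendsto (fun r => φ r ^ 2 * A r * (deriv u r / u r))
        (nhdsWithin r₀ (Set.Ioi r₀)) (nhds 0) →
      Filter.Tendsto (fun r => φ r ^ 2 * A r * (deriv u r / u r)) Filter.atTop (nhds 0) →
      MeasureTheory.IntegrableOn (fun r => A r * deriv φ r ^ 2 + V r * φ r ^ 2)
        (Set.Ioi r₀) →
        0 ≤ ∫ r in Set.Ioi r₀, (A r * deriv φ r ^ 2 + V r * φ r ^ 2) := by
  intro φ hφ hφ_left hφ_right hint
  have hIoi : Set.Ioi r₀ ⊆ Set.Ici r₀ := Set.Ioi_subset_Ici_self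
  have hdiff : ∀ {f : ℝ → ℝ}, ContDiffOn ℝ (⊤ : ℕ∞) f (Set.Ioi r₀) →
      ∀ x ∈ Set.Ioi r₀, DifferentiableAt ℝ f x := fun hf x hx =>
    (hf.differentiableOn (by simp)).differentiableAt (isOpen_Ioi.mem_nhds hx)
  have hflux : ContDiffOn ℝ (⊤ : ℕ∞) (fun s => A s * deriv u s) (Set.Ioi r₀) :=
    (hA.mono hIoi).mul
      ((contDiffOn_infty_iff_deriv_of_isOpen isOpen_Ioi).1 (hu.mono hIoi)).2
  have hpicone : ∀ x ∈ Set.Ioi r₀, HasDerivAt (fun r => φ r ^ 2 * A r * (deriv u r / u r))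
      (A x * deriv φ x ^ 2 + V x * φ x ^ 2 -
        A x * (deriv φ x - φ x * deriv u x / u x) ^ 2) x := fun x hx =>
    hasDerivAt_picone (hdiff (hφ.mono hIoi) x hx)
      (hdiff (hu.mono hIoi) x hx) (hupos x (hIoi hx)).ne'
      (hODE x (hIoi hx) ▸ (hdiff hflux x hx).hasDerivAt)
  simpa using sub_le_integral_Ioi_of_hasDerivAt_of_le hpicone
    (fun x hx => sub_le_self _ (mul_nonneg (hApos x (hIoi hx)).le (sq_nonneg _)))
    hint hφ_left hφ_right

/-- **Step 1 of the Hardy lemma: a positive solution of the associated ODE yields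
nonnegativity of the quadratic form.** -/
theorem hardy_from_positive_solution (r₀ : ℝ) (A V u : ℝ → ℝ)
    (hA : ContDiffOn ℝ (⊤ : ℕ∞) A (Set.Ici r₀)) (hV : ContDiffOn ℝ (⊤ : ℕ∞) V (Set.Ici r₀))
    (hApos : ∀ r ∈ Set.Ici r₀, 0 < A r)
    (hu : ContDiffOn ℝ (⊤ : ℕ∞) u (Set.Ici r₀)) (hupos : ∀ r ∈ Set.Ici r₀, 0 < u r)
    (hODE : ∀ r ∈ Set.Ici r₀, deriv (fun s => A s * deriv u s) r = V r * u r) :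
    ∀ φ : ℝ → ℝ, ContDiffOn ℝ (⊤ : ℕ∞) φ (Set.Ici r₀) →
      Filter.Tendsto (fun r => φ r ^ 2 * A r * (deriv u r / u r))
        (nhdsWithin r₀ (Set.Ioi r₀)) (nhds 0) →
      Filter.Tendsto (fun r => φ r ^ 2 * A r * (deriv u r / u r)) Filter.atTop (nhds 0) →
      MeasureTheory.IntegrableOn (fun r => A r * deriv φ r ^ 2 + V r * φ r ^ 2)
        (Set.Ioi r₀) →
        0 ≤ ∫ r in Set.Ioi r₀, (A r * deriv φ r ^ 2 + V r * φ r ^ 2) :=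
  hardy_from_positive_solution_general r₀ A V u hA hApos hu hupos hODE

end KerrPaper
end
end
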